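/- Fix parameters π, Σ, r, b and let f_univ be the partial local rule defined by f_univ(X[⟨f⟩]_u^r) = f(X_u^r)[⟨f⟩]. Then for every local rule f ∈ F_{π,Σ,r,b} and every X ∈ X_{π,Σ}, the pair (f_univ, X[⟨f⟩]) intrinsically simulates (f, X) with slow-down δ = 1: there is a computable, uniformly continuous, shift-invariant injection E : X_{π,Σ} → X_{π,Σ×Γ_{π,Σ,r,b}} such that F_univ^n(X[⟨f⟩]) = E(F^n(X)) for all n ∈ ℕ, where F and F_univ are the localizable functions induced by f and f_univ respectively. -/

import Mathlib

/-!  Generalized Cayley graphs (Arrighi–Martiel–Nesme, "Intrinsic universality of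
causal graph dynamics").

A word over the alphabet `Π = π × π` describes a path in a port graph: the letter
`(a, b)` means "leave the current vertex through port `a` and enter the next vertex
through port `b`".  -/

/-- A word (path description) over the alphabet `π × π`. -/
abbrev Word (π : Type) := List (π × π)

/-- A labeled generalized Cayley graph over the port set `π` with vertex labels in `Λ`:
a language `L ⊆ (π × π)*` together with an equivalence relation `rel` on `L`
satisfying prefix-closure, `rel`-congruence, invertibility of edges and port
determinism, and a labeling of the `rel`-classes (encoded as a partial function
`label` on words, defined exactly on `L` and constant on `rel`-classes).
The pointed vertex is the class of the empty word `[]`. -/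
structure GCGraph (π : Type) (Λ : Type) where
  /-- the language of paths -/
  L : Set (Word π)
  /-- the equivalence relation `≡_L` (two paths are related iff they lead to the
  same vertex); it only relates members of `L`. -/
  rel : Word π → Word π → Prop
  /-- the labeling: `label u` is the label of the vertex reached by `u` (it is
  `some _` exactly on `L`). -/
  label : Word π → Option Λ
  eps_mem : ([] : Word π) ∈ L
  rel_refl : ∀ u ∈ L, rel u u
  rel_symm : ∀ {u v}, rel u v → rel v u
  rel_trans : ∀ {u v w}, rel u v → rel v w → rel u w
  rel_mem : ∀ {u v}, rel u v → u ∈ L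
  /-- axiom (1): prefix closure. -/
  prefix_closed : ∀ u v : Word π, u ++ v ∈ L → u ∈ L
  /-- axiom (2): congruence of the equivalence relation. -/
  rel_congr : ∀ u u' v : Word π, rel u u' → u ++ v ∈ L →
      u' ++ v ∈ L ∧ rel (u' ++ v) (u ++ v)
  /-- axiom (3): every edge can be traversed backwards. -/
  edge_inv : ∀ (u : Word π) (a b : π), u ++ [(a, b)] ∈ L →
      u ++ [(a, b), (b, a)] ∈ L ∧ rel (u ++ [(a, b), (b, a)]) u
  /-- axiom (4): port determinism — a vertex cannot be connected to two different
  vertices using the same port. -/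
  port_det : ∀ (u u' : Word π) (a b c : π), rel u u' →
      u ++ [(a, b)] ∈ L → u' ++ [(a, c)] ∈ L → b = c
  label_isSome : ∀ u, (label u).isSome ↔ u ∈ L
  label_congr : ∀ {u v}, rel u v → label u = label v

/-- The raw data of a disk: a language, a relation and a labeling
(the restriction of a generalized Cayley graph to words of bounded length). -/
structure DiskData (π Λ : Type) where
  L : Set (Word π)
  rel : Word π → Word π → Prop
  label : Word π → Option Λ

/-- The disk `X^r` of radius `r` of a generalized Cayley graph: the restriction of
`X` to the words of `L` of length at most `r` (keeping labels). -/
def GCGraph.disk {π Λ : Type} (X : GCGraph π Λ) (r : ℕ) : DiskData π Λ where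
  L := {u | u ∈ X.L ∧ u.length ≤ r}
  rel := fun u v => X.rel u v ∧ u.length ≤ r ∧ v.length ≤ r
  label := fun u => if u.length ≤ r then X.label u else none

/-- The Gromov–Hausdorff–Cantor metric on generalized Cayley graphs:
`d(X, Y) = 0` if `X = Y`, and `d(X, Y) = (1/2)^r` otherwise, where `r` is the
minimal radius such that `X^r ≠ Y^r`. -/
noncomputable def GHCdist {π Λ : Type} (X Y : GCGraph π Λ) : ℝ :=
  letI := Classical.propDecidable (X = Y)
  if X = Y then 0 else (1 / 2 : ℝ) ^ sInf {r : ℕ | X.disk r ≠ Y.disk r}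

/-! Labeled graphs `G_{π,Σ}` with ports, consistency, and local rules. -/

/-- The raw data of a labeled port graph in `G_{π,Σ}`: a set of vertices (with
names in `VN`), a set of edges — unordered pairs of vertex-port pairs — and a
labeling of the vertices, encoded as the set of pairs `(vertex, label)`. -/
structure PreGraph (VN π Λ : Type) where
  V : Set VN
  E : Set (Sym2 (VN × π))
  lab : Set (VN × Λ)

/-- `G` is a well-formed labeled graph of `G_{π,Σ}`: edges are two-element subsets
of `V(G) : π`, every vertex-port pair `u : i` appears in at most one edge, and
every vertex carries exactly one label. -/
def IsGraph {VN π Λ : Type} (G : PreGraph VN π Λ) : Prop :=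
  (∀ e ∈ G.E, ¬ e.IsDiag) ∧
  (∀ e ∈ G.E, ∀ x ∈ e, (x : VN × π).1 ∈ G.V) ∧
  (∀ x : VN × π, ∀ e₁ ∈ G.E, ∀ e₂ ∈ G.E, x ∈ e₁ → x ∈ e₂ → e₁ = e₂) ∧
  (∀ v ∈ G.V, ∃! a : Λ, (v, a) ∈ G.lab) ∧
  (∀ p ∈ G.lab, (p : VN × Λ).1 ∈ G.V)

/-- Two labeled graphs are consistent iff they agree on their intersection: they
agree on the edges attached to shared vertex-port pairs, and on the labels of
shared vertices. -/
def Consistent {VN π Λ : Type} (G H : PreGraph VN π Λ) : Prop :=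
  (∀ (u v w : VN) (k l p : π),
      s((u, k), (v, l)) ∈ G.E → s((u, k), (w, p)) ∈ H.E → v = w ∧ l = p) ∧
  (∀ (v : VN) (a b : Λ), (v, a) ∈ G.lab → (v, b) ∈ H.lab → a = b)

/-- Non-trivial consistency: consistency together with a non-empty intersection of
the vertex sets. -/
def NonTrivConsistent {VN π Λ : Type} (G H : PreGraph VN π Λ) : Prop :=
  Consistent G H ∧ (G.V ∩ H.V).Nonempty

/-- The union of two labeled graphs: union of the vertex sets, of the edge sets and
of the labelings. -/
def PreGraph.union {VN π Λ : Type} (G H : PreGraph VN π Λ) : PreGraph VN π Λ where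
  V := G.V ∪ H.V
  E := G.E ∪ H.E
  lab := G.lab ∪ H.lab

/-- `Y` is the shift of the generalized Cayley graph `X` along the path `u`
(the pointer of `X` is moved along `u`): its language is
`{v | u.v ∈ L}`, two paths are related iff their `u`-prefixed versions are, and
labels are inherited. -/
def IsShift {π Λ : Type} (X : GCGraph π Λ) (u : Word π) (Y : GCGraph π Λ) : Prop :=
  Y.L = {v : Word π | u ++ v ∈ X.L} ∧
  (∀ v v' : Word π, Y.rel v v' ↔ X.rel (u ++ v) (u ++ v')) ∧
  (∀ v : Word π, Y.label v = X.label (u ++ v))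

/-! Local rules.  The images of a local rule are graphs whose vertex names are
(disjoint) subsets of `V(X).S`: sets of pairs (path of `X`, suffix in
`S = {ε, 1, …, s}`), the suffix `ε` being represented by `0 : Fin (s+1)`. -/

/-- Vertex names used by local rules: subsets of `V(X).S`, i.e. sets of
(path, suffix) pairs. -/
abbrev VName (π : Type) (s : ℕ) := Set (Word π × Fin (s + 1))

/-- Prefixing a vertex name by a word `u`: every path occurring in the name is
prefixed by `u`. -/
def prefixName {π : Type} {s : ℕ} (u : Word π) (N : VName π s) : VName π s :=
  (fun p => (u ++ p.1, p.2)) '' N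

/-- `u.G`: the graph `G` with all vertex names prefixed by the word `u`. -/
def PreGraph.prefixG {π Λ : Type} {s : ℕ} (u : Word π)
    (G : PreGraph (VName π s) π Λ) : PreGraph (VName π s) π Λ where
  V := prefixName u '' G.V
  E := Sym2.map (fun x => (prefixName u x.1, x.2)) '' G.E
  lab := (fun q => (prefixName u q.1, q.2)) '' G.lab

/-- `f` is a (possibly partial, with domain `D`) local rule of parameters
`(|π|, Σ, r, b)` from disks of radius `r` to `G_{π,Σ}`:

* it only depends on the disk of radius `r` of its argument (it is a function of
  the disk `X^r`);
* its images are well-formed graphs;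
* the vertices of `f(X)` are pairwise disjoint subsets of `V(X^r).S`
  (sets of (path, suffix) pairs, closed under the vertex-equivalence of the disk)
  and the vertex named `ε` belongs to `f(X)`;
* images have at most `b` vertices;
* for a vertex `u ∈ X^0`, `f(X)` and `u.f(X_u)` are non-trivially consistent;
* for a vertex `u ∈ X^{2r+1}`, `f(X)` and `u.f(X_u)` are consistent. -/
structure IsLocalRule {π Λ : Type} {s : ℕ} (D : Set (GCGraph π Λ)) (r b : ℕ)
    (f : GCGraph π Λ → PreGraph (VName π s) π Λ) : Prop where
  localr : ∀ X ∈ D, ∀ Y ∈ D, X.disk r = Y.disk r → f X = f Y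
  graph : ∀ X ∈ D, IsGraph (f X)
  names_sub : ∀ X ∈ D, ∀ N ∈ (f X).V, ∀ p ∈ N,
      (p : Word π × Fin (s + 1)).1 ∈ X.L ∧ p.1.length ≤ r
  names_closed : ∀ X ∈ D, ∀ N ∈ (f X).V, ∀ p ∈ N, ∀ q : Word π,
      X.rel (p : Word π × Fin (s + 1)).1 q → q.length ≤ r → (q, p.2) ∈ N
  names_disj : ∀ X ∈ D, ∀ N ∈ (f X).V, ∀ M ∈ (f X).V, N ≠ M → N ∩ M = ∅
  eps_vertex : ∀ X ∈ D, ∃ N ∈ (f X).V, (([] : Word π), (0 : Fin (s + 1))) ∈ N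
  bounded : ∀ X ∈ D, (f X).V.Finite ∧ (f X).V.ncard ≤ b
  consist_near : ∀ X ∈ D, ∀ u ∈ X.L, u.length ≤ 0 → ∀ Y, IsShift X u Y → Y ∈ D →
      NonTrivConsistent (f X) ((f Y).prefixG u)
  consist_far : ∀ X ∈ D, ∀ u ∈ X.L, u.length ≤ 2 * r + 1 → ∀ Y, IsShift X u Y → Y ∈ D →
      Consistent (f X) ((f Y).prefixG u)

/-- The union `⋃_{u ∈ X} u.g(u)` of the prefixed images of a family of graphs
indexed by the paths of `X` (used to glue the images `u.f(X_u^r)` of a local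
rule). -/
def unionAll {π Λ : Type} {s : ℕ} (X : GCGraph π Λ)
    (g : ∀ u : Word π, u ∈ X.L → PreGraph (VName π s) π Λ) :
    PreGraph (VName π s) π Λ where
  V := ⋃ (u : X.L), ((g u.1 u.2).prefixG u.1).V
  E := ⋃ (u : X.L), ((g u.1 u.2).prefixG u.1).E
  lab := ⋃ (u : X.L), ((g u.1 u.2).prefixG u.1).lab

/-- Adjoining a description `γ` to every vertex label of a labeled graph. -/
def adjoinPre {VN π Λ Γ : Type} (γ : Γ) (G : PreGraph VN π Λ) :
    PreGraph VN π (Λ × Γ) where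
  V := G.V
  E := G.E
  lab := (fun q => (q.1, (q.2, γ))) '' G.lab

/-- `Y = X[γ]`: the generalized Cayley graph `X` with the description `γ`
adjoined to every vertex label. -/
def IsAdjoin {π Λ Γ : Type} (X : GCGraph π Λ) (γ : Γ) (Y : GCGraph π (Λ × Γ)) :
    Prop :=
  Y.L = X.L ∧ (∀ u v : Word π, Y.rel u v ↔ X.rel u v) ∧
  (∀ u : Word π, Y.label u = (X.label u).map (fun a => (a, γ)))

/-- `pathTo G v w x`: following the path `w` in the labeled graph `G` from the
vertex `v` leads to the vertex `x` (the letter `(a, b)` means: leave through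
port `a`, enter through port `b`). -/
def pathTo {VN π Λ : Type} (G : PreGraph VN π Λ) : VN → Word π → VN → Prop
  | v, [], w => w = v
  | v, (a, b) :: rest, w =>
      ∃ x : VN, x ∈ G.V ∧ s((v, a), (x, b)) ∈ G.E ∧ pathTo G x rest w

/-- `Represents G Y`: the generalized Cayley graph `Y` is `∼G`, the generalized
Cayley graph having the same structure as the labeled graph `G`, pointed at the
vertex named `ε` (the vertex whose name contains the pair `(ε, ε)`): the language
of `Y` consists of the paths of `G` from that vertex, two paths are equivalent iff
they lead to the same vertex of `G`, and labels are transported. -/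
def Represents {π Λ : Type} {s : ℕ} (G : PreGraph (VName π s) π Λ)
    (Y : GCGraph π Λ) : Prop :=
  ∃ v₀ ∈ G.V, ((([] : Word π), (0 : Fin (s + 1))) ∈ v₀) ∧
    (∀ w : Word π, w ∈ Y.L ↔ ∃ x ∈ G.V, pathTo G v₀ w x) ∧
    (∀ w w' : Word π, Y.rel w w' ↔ ∃ x ∈ G.V, pathTo G v₀ w x ∧ pathTo G v₀ w' x) ∧
    (∀ (w : Word π) (x : VName π s), x ∈ G.V → pathTo G v₀ w x →
      ∀ a : Λ, (Y.label w = some a ↔ (x, a) ∈ G.lab))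

/-- `Induces D f F`: on the domain `D`, `F` is the localizable function induced by
the local rule `f`; that is, for every `X ∈ D`, `F X` is the generalized Cayley
graph, pointed at `ε`, of the glued union `⋃_{u ∈ X} u.f(X_u^r)`. -/
def Induces {π Λ : Type} {s : ℕ} (D : Set (GCGraph π Λ))
    (f : GCGraph π Λ → PreGraph (VName π s) π Λ)
    (F : GCGraph π Λ → GCGraph π Λ) : Prop :=
  ∀ X ∈ D, ∀ sh : ∀ u : Word π, u ∈ X.L → GCGraph π Λ,
    (∀ u (hu : u ∈ X.L), IsShift X u (sh u hu)) →
    Represents (unionAll X fun u hu => f (sh u hu)) (F X)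

/-- Uniform continuity of a function between spaces of generalized Cayley graphs:
for every radius `r'` there is a radius `k` such that `X^k = Y^k` implies
`E(X)^{r'} = E(Y)^{r'}`. -/
def UnifCont {π₁ Λ₁ π₂ Λ₂ : Type} (E : GCGraph π₁ Λ₁ → GCGraph π₂ Λ₂) : Prop :=
  ∀ r' : ℕ, ∃ k : ℕ, ∀ X Y : GCGraph π₁ Λ₁,
    X.disk k = Y.disk k → (E X).disk r' = (E Y).disk r'

/-- Shift invariance of a function between spaces of generalized Cayley graphs
over the same port set: any shift of the argument only induces the corresponding
shift of the image. -/
def ShiftInvariant {π Λ₁ Λ₂ : Type} (E : GCGraph π Λ₁ → GCGraph π Λ₂) : Prop :=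
  ∀ (X Y : GCGraph π Λ₁) (u : Word π), u ∈ X.L → IsShift X u Y →
    IsShift (E X) u (E Y)

/-! The simulating graph `X[⟨f⟩]` has the same paths and the same vertex equivalence as `X`, and
the images of `f_univ` are those of `f` with `⟨f⟩` adjoined to every label; gluing and
representing commute with adjoining a label, so `F_univ (X[⟨f⟩]) = (F X)[⟨f⟩]` (the graph
represented by the glued union is unique because disjointness of the names of `f(X)` leaves
a single vertex containing `(ε, ε)`).  Hence
`E = ·[⟨f⟩]`, which only relabels, is a shift-invariant, uniformly continuous injection
conjugating `F` to `F_univ`. -/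

attribute [ext] GCGraph PreGraph DiskData

section Adjoin

variable {π Λ Γ : Type}

def adjoinG (γ : Γ) (X : GCGraph π Λ) : GCGraph π (Λ × Γ) where
  L := X.L
  rel := X.rel
  label u := (X.label u).map (·, γ)
  eps_mem := X.eps_mem
  rel_refl := X.rel_refl
  rel_symm := X.rel_symm
  rel_trans := X.rel_trans
  rel_mem := X.rel_mem
  prefix_closed := X.prefix_closed
  rel_congr := X.rel_congr
  edge_inv := X.edge_inv
  port_det := X.port_det
  label_isSome u := by rw [Option.isSome_map, X.label_isSome]
  label_congr h := by rw [X.label_congr h]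

theorem isAdjoin_adjoinG (γ : Γ) (X : GCGraph π Λ) : IsAdjoin X γ (adjoinG γ X) :=
  ⟨rfl, fun _ _ => Iff.rfl, fun _ => rfl⟩

theorem IsAdjoin.eq_adjoinG {X : GCGraph π Λ} {γ : Γ} {Y : GCGraph π (Λ × Γ)}
    (h : IsAdjoin X γ Y) : Y = adjoinG γ X :=
  GCGraph.ext h.1 (funext₂ fun u v => propext (h.2.1 u v)) (funext h.2.2)

theorem adjoinG_injective (γ : Γ) : Function.Injective (adjoinG (π := π) (Λ := Λ) γ) := by
  intro X Y h
  have hlabel : ∀ u, (X.label u).map (·, γ) = (Y.label u).map (·, γ) :=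
    fun u => congrFun (congrArg GCGraph.label h) u
  exact GCGraph.ext (congrArg GCGraph.L h :) (congrArg GCGraph.rel h :)
    (funext fun u => Option.map_injective (fun _ _ h => (Prod.mk.inj h).1) (hlabel u))

theorem disk_adjoinG (γ : Γ) (X : GCGraph π Λ) (r : ℕ) :
    (adjoinG γ X).disk r =
      ⟨(X.disk r).L, (X.disk r).rel, fun u => ((X.disk r).label u).map (·, γ)⟩ :=
  DiskData.ext rfl rfl <| funext fun u => by
    simp only [GCGraph.disk, adjoinG]
    split_ifs <;> rfl

theorem unifCont_adjoinG (γ : Γ) : UnifCont (adjoinG (π := π) (Λ := Λ) γ) :=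
  fun r => ⟨r, fun X Y h => by rw [disk_adjoinG, disk_adjoinG, h]⟩

theorem shiftInvariant_adjoinG (γ : Γ) : ShiftInvariant (adjoinG (π := π) (Λ := Λ) γ) :=
  fun _ _ _ _ ⟨hL, hrel, hlabel⟩ => ⟨hL, hrel, fun v => by simp only [adjoinG, hlabel]⟩

end Adjoin

section Shift

variable {π Λ : Type}

def shiftG (X : GCGraph π Λ) (u : Word π) (hu : u ∈ X.L) : GCGraph π Λ where
  L := {v | u ++ v ∈ X.L}
  rel v v' := X.rel (u ++ v) (u ++ v')
  label v := X.label (u ++ v)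
  eps_mem := by simpa using hu
  rel_refl _ hv := X.rel_refl _ hv
  rel_symm := X.rel_symm
  rel_trans := X.rel_trans
  rel_mem := X.rel_mem
  prefix_closed v w h := X.prefix_closed (u ++ v) w (by simpa using h)
  rel_congr v v' w h hm := by simpa using X.rel_congr _ _ w h (by simpa using hm)
  edge_inv v a b h := by simpa using X.edge_inv (u ++ v) a b (by simpa using h)
  port_det v v' a b c h h₁ h₂ :=
    X.port_det (u ++ v) (u ++ v') a b c h (by simpa using h₁) (by simpa using h₂)
  label_isSome v := X.label_isSome (u ++ v)
  label_congr := X.label_congr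

theorem isShift_shiftG (X : GCGraph π Λ) (u : Word π) (hu : u ∈ X.L) :
    IsShift X u (shiftG X u hu) :=
  ⟨rfl, fun _ _ => Iff.rfl, fun _ => rfl⟩

theorem shiftG_adjoinG {Γ : Type} (γ : Γ) (X : GCGraph π Λ) (u : Word π)
    (hu : u ∈ (adjoinG γ X).L) : shiftG (adjoinG γ X) u hu = adjoinG γ (shiftG X u hu) :=
  rfl

end Shift

section Represents

variable {π Λ Γ : Type} {s : ℕ}

theorem pathTo_adjoinPre {VN : Type} (γ : Γ) (G : PreGraph VN π Λ) :
    pathTo (adjoinPre γ G) = pathTo G := by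
  funext v w x
  induction w generalizing v with
  | nil => rfl
  | cons p w ih => simp only [pathTo, ih]; rfl

theorem Represents.adjoin (γ : Γ) {G : PreGraph (VName π s) π Λ} {Y : GCGraph π Λ}
    (h : Represents G Y) : Represents (adjoinPre γ G) (adjoinG γ Y) := by
  obtain ⟨v₀, hv₀, hε, hL, hrel, hlabel⟩ := h
  refine ⟨v₀, hv₀, hε, ?_, ?_, ?_⟩
  · rw [pathTo_adjoinPre]; exact hL
  · rw [pathTo_adjoinPre]; exact hrel
  · rintro w x hx hw ⟨a, γ'⟩
    rw [pathTo_adjoinPre] at hw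
    have hlabel_a := hlabel w x hx hw a
    simp only [adjoinG, adjoinPre, Option.map_eq_some_iff, Prod.mk.injEq, Set.mem_image,
      Prod.exists]
    aesop

theorem Represents.unique {G : PreGraph (VName π s) π Λ} {Y₁ Y₂ : GCGraph π Λ}
    (hε : ∀ N ∈ G.V, ∀ M ∈ G.V, (([] : Word π), (0 : Fin (s + 1))) ∈ N →
      (([] : Word π), (0 : Fin (s + 1))) ∈ M → N = M)
    (h₁ : Represents G Y₁) (h₂ : Represents G Y₂) : Y₁ = Y₂ := by
  obtain ⟨v₁, hv₁, hε₁, hL₁, hrel₁, hlabel₁⟩ := h₁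
  obtain ⟨v₂, hv₂, hε₂, hL₂, hrel₂, hlabel₂⟩ := h₂
  obtain rfl := hε _ hv₁ _ hv₂ hε₁ hε₂
  have hL : Y₁.L = Y₂.L := Set.ext fun w => (hL₁ w).trans (hL₂ w).symm
  refine GCGraph.ext hL (funext₂ fun w w' => propext ((hrel₁ w w').trans (hrel₂ w w').symm))
    (funext fun w => ?_)
  by_cases hw : w ∈ Y₁.L
  · obtain ⟨x, hx, hpath⟩ := (hL₁ w).mp hw
    obtain ⟨a, ha⟩ := Option.isSome_iff_exists.mp ((Y₁.label_isSome w).mpr hw)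
    rw [ha, ((hlabel₂ w x hx hpath a).mpr ((hlabel₁ w x hx hpath a).mp ha))]
  · have hw₂ : w ∉ Y₂.L := hL ▸ hw
    rw [← Y₁.label_isSome, Option.not_isSome_iff_eq_none] at hw
    rw [← Y₂.label_isSome, Option.not_isSome_iff_eq_none] at hw₂
    rw [hw, hw₂]

end Represents

section Union

variable {π Λ : Type} {s : ℕ}

theorem unionAll_adjoinPre {Γ : Type} (γ : Γ) (Z : GCGraph π Λ)
    (g : ∀ u : Word π, u ∈ Z.L → PreGraph (VName π s) π Λ) :
    unionAll (adjoinG γ Z) (fun u hu => adjoinPre γ (g u hu)) = adjoinPre γ (unionAll Z g) := by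
  refine PreGraph.ext rfl rfl ?_
  simp only [unionAll, adjoinPre, PreGraph.prefixG, Set.image_iUnion, Set.image_image]
  rfl

theorem mem_of_eps_mem_unionAll {Z : GCGraph π Λ}
    {g : ∀ u : Word π, u ∈ Z.L → PreGraph (VName π s) π Λ} {N : VName π s}
    (hN : N ∈ (unionAll Z g).V) (hε : (([] : Word π), (0 : Fin (s + 1))) ∈ N) :
    N ∈ (g [] Z.eps_mem).V := by
  simp only [unionAll, PreGraph.prefixG, Set.mem_iUnion, Set.mem_image] at hN
  obtain ⟨⟨u, hu⟩, N₀, hN₀, rfl⟩ := hN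
  obtain ⟨p, -, hp⟩ := hε
  obtain rfl : u = [] := (List.append_eq_nil_iff.mp (Prod.mk.inj hp).1).1
  simpa [prefixName] using hN₀

theorem IsLocalRule.eps_vertex_unique_unionAll {r b : ℕ}
    {f : GCGraph π Λ → PreGraph (VName π s) π Λ} (hf : IsLocalRule Set.univ r b f)
    (Z : GCGraph π Λ) :
    ∀ N ∈ (unionAll Z fun u hu => f (shiftG Z u hu)).V,
      ∀ M ∈ (unionAll Z fun u hu => f (shiftG Z u hu)).V,
      (([] : Word π), (0 : Fin (s + 1))) ∈ N → (([] : Word π), (0 : Fin (s + 1))) ∈ M →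
      N = M := by
  intro N hN M hM hεN hεM
  by_contra hNM
  have hdisj := hf.names_disj _ (Set.mem_univ _) N (mem_of_eps_mem_unionAll hN hεN)
    M (mem_of_eps_mem_unionAll hM hεM) hNM
  exact (Set.eq_empty_iff_forall_notMem.mp hdisj) _ ⟨hεN, hεM⟩

end Union

theorem semiconj_adjoinG_of_induces {π Λ Γ : Type} {s r b : ℕ} (γ : Γ)
    {f : GCGraph π Λ → PreGraph (VName π s) π Λ} {F : GCGraph π Λ → GCGraph π Λ}
    {D : Set (GCGraph π (Λ × Γ))} {fu : GCGraph π (Λ × Γ) → PreGraph (VName π s) π (Λ × Γ)}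
    {Fu : GCGraph π (Λ × Γ) → GCGraph π (Λ × Γ)}
    (hf : IsLocalRule Set.univ r b f) (hF : Induces Set.univ f F) (hFu : Induces D fu Fu)
    (hD : ∀ Z, adjoinG γ Z ∈ D) (hfu : ∀ Z, fu (adjoinG γ Z) = adjoinPre γ (f Z)) :
    Function.Semiconj (adjoinG γ) F Fu := by
  intro Z
  have hRF := hF Z (Set.mem_univ Z) (shiftG Z) (isShift_shiftG Z)
  have hRFu := hFu (adjoinG γ Z) (hD Z) (shiftG (adjoinG γ Z)) (isShift_shiftG _)
  have hunion : (unionAll (adjoinG γ Z) fun u hu => fu (shiftG (adjoinG γ Z) u hu)) =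
      adjoinPre γ (unionAll Z fun u hu => f (shiftG Z u hu)) := by
    simp only [shiftG_adjoinG, hfu]
    exact unionAll_adjoinPre γ Z _
  rw [hunion] at hRFu
  exact (hRF.adjoin γ).unique (hf.eps_vertex_unique_unionAll Z) hRFu

theorem funiv_intrinsically_simulates_general {d s : ℕ} {Λ Γ : Type}
    (r b : ℕ)
    (desc : (GCGraph (Fin d) Λ → PreGraph (VName (Fin d) s) (Fin d) Λ) → Γ)
    (f : GCGraph (Fin d) Λ → PreGraph (VName (Fin d) s) (Fin d) Λ)
    (hf : IsLocalRule Set.univ r b f)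
    (fu : GCGraph (Fin d) (Λ × Γ) → PreGraph (VName (Fin d) s) (Fin d) (Λ × Γ))
    (hfu_eq : ∀ g, IsLocalRule Set.univ r b g →
      ∀ (X : GCGraph (Fin d) Λ) (Y : GCGraph (Fin d) (Λ × Γ)),
        IsAdjoin X (desc g) Y → fu Y = adjoinPre (desc g) (g X))
    (F : GCGraph (Fin d) Λ → GCGraph (Fin d) Λ)
    (hF : Induces Set.univ f F)
    (Fu : GCGraph (Fin d) (Λ × Γ) → GCGraph (Fin d) (Λ × Γ))
    (hFu : Induces {Y : GCGraph (Fin d) (Λ × Γ) |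
        ∃ g, IsLocalRule Set.univ r b g ∧ ∃ X, IsAdjoin X (desc g) Y} fu Fu)
    (X : GCGraph (Fin d) Λ) (Xf : GCGraph (Fin d) (Λ × Γ))
    (hXf : IsAdjoin X (desc f) Xf) :
    ∃ E : GCGraph (Fin d) Λ → GCGraph (Fin d) (Λ × Γ),
      Function.Injective E ∧ UnifCont E ∧ ShiftInvariant E ∧
      ∀ n : ℕ, Fu^[1 * n] Xf = E (F^[n] X) := by
  have hsemiconj : Function.Semiconj (adjoinG (desc f)) F Fu :=
    semiconj_adjoinG_of_induces (desc f) hf hF hFu (fun Z => ⟨f, hf, Z, isAdjoin_adjoinG _ Z⟩)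
      (fun Z => hfu_eq f hf Z _ (isAdjoin_adjoinG _ Z))
  refine ⟨adjoinG (desc f), adjoinG_injective _, unifCont_adjoinG _, shiftInvariant_adjoinG _,
    fun n => ?_⟩
  rw [one_mul, hXf.eq_adjoinG]
  exact (hsemiconj.iterate_right n X).symm

/-- Fix parameters `π, Σ, r, b`, a set `Γ` of descriptions of the local rules of
`F_{π,Σ,r,b}`, and let `f_univ` be the partial local rule (with domain the graphs
of the form `X[⟨f⟩]`) defined by `f_univ(X[⟨f⟩]_u^r) = f(X_u^r)[⟨f⟩]`.  Then for
every local rule `f ∈ F_{π,Σ,r,b}` and every `X ∈ X_{π,Σ}`, the pair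
`(f_univ, X[⟨f⟩])` intrinsically simulates `(f, X)` with slow-down `δ = 1`:
there is a uniformly continuous and shift-invariant injection
`E : X_{π,Σ} → X_{π,Σ×Γ}` such that `F_univ^n(X[⟨f⟩]) = E (F^n X)` for all `n`,
where `F` and `F_univ` are the localizable functions induced by `f` and `f_univ`.
(The map `E` of the paper is moreover computable; computability is not modelled
here.) -/
theorem funiv_intrinsically_simulates {d s : ℕ} {Λ Γ : Type} [Fintype Λ] [Fintype Γ]
    (r b : ℕ)
    (desc : (GCGraph (Fin d) Λ → PreGraph (VName (Fin d) s) (Fin d) Λ) → Γ)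
    (hdesc : Set.InjOn desc {f | IsLocalRule Set.univ r b f})
    (f : GCGraph (Fin d) Λ → PreGraph (VName (Fin d) s) (Fin d) Λ)
    (hf : IsLocalRule Set.univ r b f)
    (fu : GCGraph (Fin d) (Λ × Γ) → PreGraph (VName (Fin d) s) (Fin d) (Λ × Γ))
    (hfu_eq : ∀ g, IsLocalRule Set.univ r b g →
      ∀ (X : GCGraph (Fin d) Λ) (Y : GCGraph (Fin d) (Λ × Γ)),
        IsAdjoin X (desc g) Y → fu Y = adjoinPre (desc g) (g X))
    (hfu : IsLocalRule {Y : GCGraph (Fin d) (Λ × Γ) |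
        ∃ g, IsLocalRule Set.univ r b g ∧ ∃ X, IsAdjoin X (desc g) Y} r b fu)
    (F : GCGraph (Fin d) Λ → GCGraph (Fin d) Λ)
    (hF : Induces Set.univ f F)
    (Fu : GCGraph (Fin d) (Λ × Γ) → GCGraph (Fin d) (Λ × Γ))
    (hFu : Induces {Y : GCGraph (Fin d) (Λ × Γ) |
        ∃ g, IsLocalRule Set.univ r b g ∧ ∃ X, IsAdjoin X (desc g) Y} fu Fu)
    (X : GCGraph (Fin d) Λ) (Xf : GCGraph (Fin d) (Λ × Γ))
    (hXf : IsAdjoin X (desc f) Xf) :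
    ∃ E : GCGraph (Fin d) Λ → GCGraph (Fin d) (Λ × Γ),
      Function.Injective E ∧ UnifCont E ∧ ShiftInvariant E ∧
      ∀ n : ℕ, Fu^[1 * n] Xf = E (F^[n] X) :=
  funiv_intrinsically_simulates_general r b desc f hf fu hfu_eq F hF Fu hFu X Xf hXf
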